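/- arXiv:2506.08405 — 2 statements merged into one kernel-verified Lean document; each statement's English description precedes it below -/
import Mathlib

section
/- Let G be a simple graph with m edges and maximum degree at most D, where D ≤ √m and m ≥ 1. Let p = 1/(10 m^{1/3} D^{1/3}) and fix an edge (u,v) of G. Sample S ⊆ V by including each vertex independently with probability p. Then, conditioned on u, v ∈ S, the probability that the induced subgraph G[S] is not a matching (i.e., has a vertex of degree ≥ 2) is at most 1/5 + 1/500. -/
open MeasureTheory ProbabilityTheory ENNReal in
lemma cyl_measure13 {V : Type*} [Fintype V] [DecidableEq V] (p : ℝ≥0∞) (hp1 : p ≤ 1)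
    (F : Finset V) :
    (Measure.pi fun _ : V => (PMF.bernoulli p.toNNReal (by simpa using ENNReal.toNNReal_mono ENNReal.one_ne_top hp1)).toMeasure)
      {f : V → Bool | ∀ i ∈ F, f i = true} = p ^ F.card := by
  have hset : {f : V → Bool | ∀ i ∈ F, f i = true} =
      Set.pi Set.univ (fun i => if i ∈ F then {true} else Set.univ) := by
    ext f
    simp only [Set.mem_setOf_eq, Set.mem_pi, Set.mem_univ, true_implies]
    constructor
    · intro h i
      by_cases hi : i ∈ F <;> simp [hi, h]
    · intro h i hi
      have := h i
      simpa [hi] using this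
  rw [hset, Measure.pi_pi]
  have hone : ((PMF.bernoulli p.toNNReal (by simpa using ENNReal.toNNReal_mono ENNReal.one_ne_top hp1)).toMeasure) Set.univ = 1 := measure_univ
  have htrue : ((PMF.bernoulli p.toNNReal (by simpa using ENNReal.toNNReal_mono ENNReal.one_ne_top hp1)).toMeasure) {true} = p := by
    rw [PMF.toMeasure_apply_singleton _ _ (measurableSet_singleton _)]
    simp [PMF.bernoulli, ne_top_of_le_ne_top one_ne_top hp1]
  calc ∏ i : V, ((PMF.bernoulli p.toNNReal (by simpa using ENNReal.toNNReal_mono ENNReal.one_ne_top hp1)).toMeasure) (if i ∈ F then {true} else Set.univ)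
      = ∏ i : V, (if i ∈ F then p else 1) := by
        refine Finset.prod_congr rfl fun i _ => ?_
        by_cases hi : i ∈ F <;> simp only [hi, ↓reduceIte, htrue, hone]
    _ = p ^ F.card := by
        rw [Finset.prod_ite_mem, Finset.univ_inter, Finset.prod_const]



open MeasureTheory ProbabilityTheory ENNReal in
/-- Let `G` have `m ≥ 1` edges and maximum degree at most `D ≤ √m`, let
`p = 1/(10 m^{1/3} D^{1/3})`, fix an edge `(u,v)`, and sample `S ⊆ V` by including each vertex
independently with probability `p`. Conditioned on `u, v ∈ S`, the probability that `G[S]` is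
not a matching (some vertex has two distinct neighbors in `S`) is at most `1/5 + 1/500`. -/
theorem stmt13 {V : Type*} [Fintype V] [DecidableEq V] (G : SimpleGraph V) [DecidableRel G.Adj]
    (m D : ℕ) (hm : 1 ≤ m) (hmE : G.edgeFinset.card = m)
    (hdeg : ∀ w : V, G.degree w ≤ D) (hD : (D : ℝ) ≤ Real.sqrt m)
    (u v : V) (huv : G.Adj u v)
    (p : ℝ≥0∞)
    (hp : p = ENNReal.ofReal (1 / (10 * (m : ℝ) ^ ((1 : ℝ) / 3) * (D : ℝ) ^ ((1 : ℝ) / 3))))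
    (hp1 : p ≤ 1) :
    ProbabilityTheory.cond
        (MeasureTheory.Measure.pi fun _ : V => (PMF.bernoulli p.toNNReal (by simpa using ENNReal.toNNReal_mono ENNReal.one_ne_top hp1)).toMeasure)
        {f : V → Bool | f u = true ∧ f v = true}
        {f : V → Bool |
          ∃ w x y : V, x ≠ y ∧ f w = true ∧ f x = true ∧ f y = true ∧
            G.Adj w x ∧ G.Adj w y} ≤
      ENNReal.ofReal (1 / 5 + 1 / 500) := by
  classical
  set μ := MeasureTheory.Measure.pi fun _ : V => (PMF.bernoulli p.toNNReal (by simpa using ENNReal.toNNReal_mono ENNReal.one_ne_top hp1)).toMeasure with hμdef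
  set A := {f : V → Bool | f u = true ∧ f v = true} with hAdef
  set B := {f : V → Bool |
      ∃ w x y : V, x ≠ y ∧ f w = true ∧ f x = true ∧ f y = true ∧
        G.Adj w x ∧ G.Adj w y} with hBdef
  have hcyl : ∀ F : Finset V, μ {f : V → Bool | ∀ i ∈ F, f i = true} = p ^ F.card :=
    cyl_measure13 p hp1
  -- basic positivity facts
  have hD1 : 1 ≤ D := le_trans (by
    rw [← SimpleGraph.card_neighborFinset_eq_degree]
    exact Finset.card_pos.mpr ⟨v, by simp [huv]⟩) (hdeg u)
  have hmR : (1:ℝ) ≤ (m:ℝ) := by exact_mod_cast hm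
  have hDR : (1:ℝ) ≤ (D:ℝ) := by exact_mod_cast hD1
  set a : ℝ := (m : ℝ) ^ ((1 : ℝ) / 3) with hadef
  set b : ℝ := (D : ℝ) ^ ((1 : ℝ) / 3) with hbdef
  have ha0 : 0 < a := Real.rpow_pos_of_pos (by linarith) _
  have hb0 : 0 < b := Real.rpow_pos_of_pos (by linarith) _
  set r : ℝ := 1 / (10 * a * b) with hrdef
  have hr0 : 0 < r := by positivity
  have hp0 : p ≠ 0 := by rw [hp]; simpa using hr0
  have hptop : p ≠ ⊤ := ne_top_of_le_ne_top one_ne_top hp1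
  have ha3 : a ^ (3:ℕ) = (m:ℝ) := by
    rw [hadef, ← Real.rpow_natCast (((m:ℝ)) ^ ((1:ℝ)/3)) 3, ← Real.rpow_mul (by linarith)]
    norm_num
  have hb3 : b ^ (3:ℕ) = (D:ℝ) := by
    rw [hbdef, ← Real.rpow_natCast (((D:ℝ)) ^ ((1:ℝ)/3)) 3, ← Real.rpow_mul (by linarith)]
    norm_num
  have hDab : (D:ℝ) ≤ a * b := by
    have hD2 : (D:ℝ)^2 ≤ (m:ℝ) := by
      nlinarith [Real.sq_sqrt (show (0:ℝ) ≤ (m:ℝ) by linarith), Real.sqrt_nonneg (m:ℝ)]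
    have h1 : ((D:ℝ)^2) ^ ((1:ℝ)/3) ≤ a :=
      Real.rpow_le_rpow (by positivity) hD2 (by norm_num)
    have h2 : ((D:ℝ)^2) ^ ((1:ℝ)/3) * b = (D:ℝ) := by
      rw [hbdef, ← Real.rpow_natCast ((D:ℝ)) 2, ← Real.rpow_mul (by linarith),
        ← Real.rpow_add (by linarith)]
      norm_num
    calc (D:ℝ) = ((D:ℝ)^2) ^ ((1:ℝ)/3) * b := h2.symm
      _ ≤ a * b := by exact mul_le_mul_of_nonneg_right h1 hb0.le
  -- the two real inequalities
  have hineq1 : 2 * (D:ℝ) * r ≤ 1/5 := by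
    rw [hrdef, mul_one_div, div_le_div_iff₀ (by positivity) (by norm_num)]
    nlinarith
  have hineq2 : 2 * (m:ℝ) * (D:ℝ) * r^3 ≤ 1/500 := by
    have hr3 : r^3 = 1/(1000 * (m:ℝ) * (D:ℝ)) := by
      rw [hrdef]
      rw [div_pow, one_pow]
      congr 1
      have : (10 * a * b)^(3:ℕ) = 1000 * a^(3:ℕ) * b^(3:ℕ) := by ring
      rw [this, ha3, hb3]
    rw [hr3]
    rw [mul_one_div, div_le_div_iff₀ (by positivity) (by norm_num)]
    nlinarith
  -- measurability of A
  have hAmeas : MeasurableSet A := by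
    have h1 : A = (fun f : V → Bool => f u) ⁻¹' {true} ∩ (fun f : V → Bool => f v) ⁻¹' {true} := by
      ext f; simp [hAdef]
    rw [h1]
    exact ((measurable_pi_apply u) (measurableSet_singleton true)).inter
      ((measurable_pi_apply v) (measurableSet_singleton true))
  -- A as a cylinder
  have hAcyl : A = {f : V → Bool | ∀ i ∈ ({u, v} : Finset V), f i = true} := by
    ext f; simp [hAdef]
  have hμA : μ A = p ^ 2 := by
    rw [hAcyl, hcyl, Finset.card_pair huv.ne]
  -- the key finsets
  set T : Finset V := (G.neighborFinset u ∪ G.neighborFinset v) \ {u, v} with hTdef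
  set Tri : Finset (V × V × V) := Finset.univ.filter
    (fun t => t.2.1 ≠ t.2.2 ∧ G.Adj t.1 t.2.1 ∧ G.Adj t.1 t.2.2 ∧
      t.1 ∉ ({u,v} : Finset V) ∧ t.2.1 ∉ ({u,v} : Finset V) ∧ t.2.2 ∉ ({u,v} : Finset V))
    with hTridef
  have hTcard : T.card ≤ 2 * D := by
    calc T.card ≤ (G.neighborFinset u ∪ G.neighborFinset v).card :=
          Finset.card_le_card (Finset.sdiff_subset)
      _ ≤ (G.neighborFinset u).card + (G.neighborFinset v).card := Finset.card_union_le _ _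
      _ ≤ D + D := by
          rw [SimpleGraph.card_neighborFinset_eq_degree, SimpleGraph.card_neighborFinset_eq_degree]
          exact Nat.add_le_add (hdeg u) (hdeg v)
      _ = 2 * D := by ring
  have hTricard : Tri.card ≤ 2 * m * D := by
    have hsub : Tri ⊆ Finset.univ.biUnion
        (fun w : V => ({w} : Finset V) ×ˢ (G.neighborFinset w ×ˢ G.neighborFinset w)) := by
      intro t ht
      simp only [hTridef, Finset.mem_filter] at ht
      simp only [Finset.mem_biUnion, Finset.mem_univ, Finset.mem_product, Finset.mem_singleton,
        SimpleGraph.mem_neighborFinset]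
      exact ⟨t.1, trivial, rfl, ht.2.2.1, ht.2.2.2.1⟩
    calc Tri.card ≤ _ := Finset.card_le_card hsub
      _ ≤ ∑ w : V, (({w} : Finset V) ×ˢ (G.neighborFinset w ×ˢ G.neighborFinset w)).card :=
          Finset.card_biUnion_le
      _ = ∑ w : V, G.degree w * G.degree w := by
          refine Finset.sum_congr rfl fun w _ => ?_
          simp [Finset.card_product, SimpleGraph.card_neighborFinset_eq_degree]
      _ ≤ ∑ w : V, G.degree w * D := by
          exact Finset.sum_le_sum fun w _ => Nat.mul_le_mul_left _ (hdeg w)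
      _ = (∑ w : V, G.degree w) * D := by rw [Finset.sum_mul]
      _ = 2 * m * D := by rw [SimpleGraph.sum_degrees_eq_twice_card_edges, hmE]
  -- covering
  set C : Finset V → Set (V → Bool) := fun F => {f : V → Bool | ∀ i ∈ F, f i = true} with hCdef
  have hcover : A ∩ B ⊆ (⋃ z ∈ T, C {u, v, z}) ∪
      (⋃ t ∈ Tri, C {u, v, t.1, t.2.1, t.2.2}) := by
    rintro f ⟨⟨hfu, hfv⟩, w, x, y, hxy, hfw, hfx, hfy, hwx, hwy⟩
    by_cases hz : ∃ z ∈ T, f z = true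
    · obtain ⟨z, hzT, hzf⟩ := hz
      left
      refine Set.mem_iUnion₂.mpr ⟨z, hzT, ?_⟩
      intro i hi
      simp only [Finset.mem_insert, Finset.mem_singleton] at hi
      rcases hi with rfl | rfl | rfl <;> assumption
    · push_neg at hz
      right
      have key : ∀ c d : V, G.Adj c d → f d = true → (c = u ∨ c = v) → d = u ∨ d = v := by
        intro c d hcd hfd hc
        by_contra hd
        push_neg at hd
        refine hz d ?_ hfd
        rw [hTdef]
        simp only [Finset.mem_sdiff, Finset.mem_union, SimpleGraph.mem_neighborFinset,
          Finset.mem_insert, Finset.mem_singleton]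
        rcases hc with rfl | rfl
        · exact ⟨Or.inl hcd, by tauto⟩
        · exact ⟨Or.inr hcd, by tauto⟩
      have hxyuv : ∀ x' y' : V, x' ≠ y' → f x' = true → f y' = true →
          G.Adj w x' → G.Adj w y' → x' ≠ u ∧ x' ≠ v := by
        intro x' y' hxy' hfx' hfy' hwx' hwy'
        constructor
        · rintro rfl
          rcases key x' w hwx'.symm hfw (Or.inl rfl) with rfl | rfl
          · exact hwx'.ne rfl
          · rcases key w y' hwy' hfy' (Or.inr rfl) with rfl | rfl
            · exact hxy' rfl
            · exact hwy'.ne rfl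
        · rintro rfl
          rcases key x' w hwx'.symm hfw (Or.inr rfl) with rfl | rfl
          · rcases key w y' hwy' hfy' (Or.inl rfl) with rfl | rfl
            · exact hwy'.ne rfl
            · exact hxy' rfl
          · exact hwx'.ne rfl
      obtain ⟨hxu, hxv⟩ := hxyuv x y hxy hfx hfy hwx hwy
      obtain ⟨hyu, hyv⟩ := hxyuv y x hxy.symm hfy hfx hwy hwx
      have hwu : w ≠ u := by
        rintro rfl
        rcases key w x hwx hfx (Or.inl rfl) with rfl | rfl
        · exact hxu rfl
        · exact hxv rfl
      have hwv : w ≠ v := by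
        rintro rfl
        rcases key w x hwx hfx (Or.inr rfl) with rfl | rfl
        · exact hxu rfl
        · exact hxv rfl
      have hTriMem : (w, x, y) ∈ Tri := by
        rw [hTridef]
        simp only [Finset.mem_filter, Finset.mem_univ, Finset.mem_insert, Finset.mem_singleton,
          true_and]
        exact ⟨hxy, hwx, hwy, by tauto, by tauto, by tauto⟩
      refine Set.mem_iUnion₂.mpr ⟨(w, x, y), hTriMem, ?_⟩
      intro i hi
      simp only [Finset.mem_insert, Finset.mem_singleton] at hi
      rcases hi with rfl | rfl | rfl | rfl | rfl <;> assumption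
  -- measures of cylinders
  have hC3 : ∀ z ∈ T, μ (C {u, v, z}) = p ^ 3 := by
    intro z hzT
    have hzuv : z ≠ u ∧ z ≠ v := by
      rw [hTdef] at hzT
      simp only [Finset.mem_sdiff, Finset.mem_insert, Finset.mem_singleton] at hzT
      tauto
    rw [hCdef]
    rw [hcyl]
    congr 1
    rw [Finset.card_insert_of_notMem (by simp [huv.ne, Ne.symm hzuv.1]),
      Finset.card_insert_of_notMem (by simp [Ne.symm hzuv.2]), Finset.card_singleton]
  have hC5 : ∀ t ∈ Tri, μ (C {u, v, t.1, t.2.1, t.2.2}) = p ^ 5 := by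
    intro t ht
    rw [hTridef] at ht
    simp only [Finset.mem_filter, Finset.mem_univ, Finset.mem_insert, Finset.mem_singleton,
      true_and, not_or] at ht
    obtain ⟨hxy, hwx, hwy, ⟨hwu, hwv⟩, ⟨hxu, hxv⟩, ⟨hyu, hyv⟩⟩ := ht
    rw [hCdef, hcyl]
    congr 1
    rw [Finset.card_insert_of_notMem (by simp [huv.ne, Ne.symm hwu, Ne.symm hxu, Ne.symm hyu]),
      Finset.card_insert_of_notMem (by simp [Ne.symm hwv, Ne.symm hxv, Ne.symm hyv]),
      Finset.card_insert_of_notMem (by simp [hwx.ne, hwy.ne]),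
      Finset.card_insert_of_notMem (by simp [hxy]), Finset.card_singleton]
  -- main measure bound
  have hμAB : μ (A ∩ B) ≤ T.card * p ^ 3 + Tri.card * p ^ 5 := by
    calc μ (A ∩ B) ≤ μ ((⋃ z ∈ T, C {u, v, z}) ∪ (⋃ t ∈ Tri, C {u, v, t.1, t.2.1, t.2.2})) :=
          measure_mono hcover
      _ ≤ μ (⋃ z ∈ T, C {u, v, z}) + μ (⋃ t ∈ Tri, C {u, v, t.1, t.2.1, t.2.2}) :=
          measure_union_le _ _
      _ ≤ (∑ z ∈ T, μ (C {u, v, z})) + ∑ t ∈ Tri, μ (C {u, v, t.1, t.2.1, t.2.2}) :=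
          add_le_add (measure_biUnion_finset_le _ _) (measure_biUnion_finset_le _ _)
      _ = T.card * p ^ 3 + Tri.card * p ^ 5 := by
          rw [Finset.sum_congr rfl hC3, Finset.sum_congr rfl hC5,
            Finset.sum_const, Finset.sum_const, nsmul_eq_mul, nsmul_eq_mul]
  -- put it together
  rw [ProbabilityTheory.cond_apply hAmeas, hμA]
  calc (p ^ 2)⁻¹ * μ (A ∩ B) ≤ (p ^ 2)⁻¹ * (T.card * p ^ 3 + Tri.card * p ^ 5) := by
        exact mul_le_mul_right hμAB _
    _ = T.card * p + Tri.card * p ^ 3 := by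
        have h3 : (p:ℝ≥0∞) ^ 3 = p ^ 2 * p := by ring
        have h5 : (p:ℝ≥0∞) ^ 5 = p ^ 2 * p ^ 3 := by ring
        rw [h3, h5]
        rw [show (T.card : ℝ≥0∞) * (p ^ 2 * p) + Tri.card * (p ^ 2 * p ^ 3)
          = p ^ 2 * (T.card * p + Tri.card * (p^2 * p)) from by ring, ← mul_assoc,
          ENNReal.inv_mul_cancel (pow_ne_zero _ hp0) (ENNReal.pow_ne_top hptop), one_mul, ← h3]
    _ ≤ (2 * D : ℕ) * p + (2 * m * D : ℕ) * p ^ 3 := by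
        exact add_le_add (mul_le_mul_left (by exact_mod_cast Nat.cast_le.mpr hTcard) _)
          (mul_le_mul_left (by exact_mod_cast Nat.cast_le.mpr hTricard) _)
    _ ≤ ENNReal.ofReal (1/5) + ENNReal.ofReal (1/500) := by
        refine add_le_add ?_ ?_
        · rw [hp, show ((2 * D : ℕ) : ℝ≥0∞) = ENNReal.ofReal ((2 * D : ℕ) : ℝ) from
            (ENNReal.ofReal_natCast _).symm, ← ENNReal.ofReal_mul (by positivity)]
          refine ENNReal.ofReal_le_ofReal ?_
          push_cast
          linarith [hineq1]
        · rw [hp, show ((2 * m * D : ℕ) : ℝ≥0∞) = ENNReal.ofReal ((2 * m * D : ℕ) : ℝ) from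
            (ENNReal.ofReal_natCast _).symm, ← ENNReal.ofReal_pow (by positivity),
            ← ENNReal.ofReal_mul (by positivity)]
          refine ENNReal.ofReal_le_ofReal ?_
          push_cast
          linarith [hineq2]
    _ ≤ ENNReal.ofReal (1/5 + 1/500) :=
        le_of_eq (ENNReal.ofReal_add (by norm_num) (by norm_num)).symm
end

section
/- Let V be a vertex set of size n ≥ 4 and fix distinct vertices u, v ∈ V. Define G⁰ on V with edge set {(u,w), (w,v) : w ∈ V \ {u,v}} and G¹ with the same edges plus the edge (u,v). Then for every subset S ⊆ V with {u,v} ⊊ S or u ∉ S or v ∉ S (that is, whenever S ≠ {u,v}), the number of connected components of G⁰[S] equals the number of connected components of G¹[S]. -/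
/-- The graph on `V` consisting of all 2-paths joining `u` and `v` through every other
vertex `w`. -/
def Gpath {V : Type*} (u v : V) : SimpleGraph V :=
  SimpleGraph.fromEdgeSet {e | ∃ w, w ≠ u ∧ w ≠ v ∧ (e = s(u, w) ∨ e = s(w, v))}

/-- `Gpath u v` together with the extra edge `{u, v}`. -/
def GpathPlus {V : Type*} (u v : V) : SimpleGraph V :=
  SimpleGraph.fromEdgeSet
    ({e | ∃ w, w ≠ u ∧ w ≠ v ∧ (e = s(u, w) ∨ e = s(w, v))} ∪ {s(u, v)})

private lemma reach_mono {V : Type*} {G H : SimpleGraph V}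
    (h : ∀ a b, H.Adj a b → G.Reachable a b) {a b : V} (hr : H.Reachable a b) :
    G.Reachable a b := by
  obtain ⟨w⟩ := hr
  induction w with
  | nil => exact SimpleGraph.Reachable.refl _
  | cons hadj _ ih => exact (h _ _ hadj).trans ih

/-- For distinct `u, v` in a vertex set of size at least 4, and every `S ≠ {u, v}`,
the induced subgraphs of `G⁰ = Gpath u v` and `G¹ = GpathPlus u v` on `S` have the same
number of connected components. -/
theorem stmt14 {V : Type*} [Fintype V] (hV : 4 ≤ Fintype.card V) (u v : V) (huv : u ≠ v)
    (S : Set V) (hS : S ≠ {u, v}) :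
    Nat.card ((Gpath u v).induce S).ConnectedComponent =
      Nat.card ((GpathPlus u v).induce S).ConnectedComponent := by
  classical
  by_cases hus : u ∈ S ∧ v ∈ S
  · obtain ⟨hu, hv⟩ := hus
    obtain ⟨w, hwS, hwu, hwv⟩ : ∃ w ∈ S, w ≠ u ∧ w ≠ v := by
      by_contra hc
      push_neg at hc
      apply hS
      ext x
      constructor
      · intro hx
        rcases Classical.em (x = u) with h | h
        · exact Or.inl h
        · exact Or.inr (hc x hx h)
      · rintro (rfl | rfl) <;> assumption
    -- reachability of u and v in induced Gpath
    have hadj_uw : ((Gpath u v).induce S).Adj ⟨u, hu⟩ ⟨w, hwS⟩ := by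
      simp [Gpath, SimpleGraph.fromEdgeSet_adj]
      exact ⟨⟨w, hwu, hwv, by tauto⟩, fun h => hwu h.symm⟩
    have hadj_wv : ((Gpath u v).induce S).Adj ⟨w, hwS⟩ ⟨v, hv⟩ := by
      simp [Gpath, SimpleGraph.fromEdgeSet_adj]
      exact ⟨⟨w, hwu, hwv, by tauto⟩, hwv⟩
    have hreach_uv : ((Gpath u v).induce S).Reachable ⟨u, hu⟩ ⟨v, hv⟩ :=
      hadj_uw.reachable.trans hadj_wv.reachable
    have key : ∀ a b : S, ((Gpath u v).induce S).Reachable a b ↔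
        ((GpathPlus u v).induce S).Reachable a b := by
      intro a b
      constructor
      · refine fun hr => hr.mono ?_
        intro x y hxy
        simp only [SimpleGraph.comap_adj, Gpath, GpathPlus,
          SimpleGraph.fromEdgeSet_adj, Set.mem_union] at hxy ⊢
        exact ⟨Or.inl hxy.1, hxy.2⟩
      · refine reach_mono ?_
        rintro ⟨x, hx⟩ ⟨y, hy⟩ hxy
        simp only [SimpleGraph.comap_adj, GpathPlus, SimpleGraph.fromEdgeSet_adj,
          Set.mem_union, Set.mem_singleton_iff] at hxy
        obtain ⟨h1 | h1, hne⟩ := hxy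
        · exact SimpleGraph.Adj.reachable (by
            simp only [SimpleGraph.comap_adj, Gpath, SimpleGraph.fromEdgeSet_adj]
            exact ⟨h1, hne⟩)
        · rw [Sym2.eq_iff] at h1
          rcases h1 with ⟨rfl, rfl⟩ | ⟨rfl, rfl⟩
          · exact hreach_uv
          · exact hreach_uv.symm
    exact Nat.card_congr (Quot.congrRight key)
  · -- graphs are equal on S
    have heq : (Gpath u v).induce S = (GpathPlus u v).induce S := by
      ext ⟨a, ha⟩ ⟨b, hb⟩
      simp only [SimpleGraph.comap_adj, Gpath, GpathPlus, SimpleGraph.fromEdgeSet_adj,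
        Set.mem_union, Set.mem_singleton_iff]
      constructor
      · exact fun ⟨h1, h2⟩ => ⟨Or.inl h1, h2⟩
      · rintro ⟨h1 | h1, h2⟩
        · exact ⟨h1, h2⟩
        · exfalso
          rw [Sym2.eq_iff] at h1
          rcases h1 with ⟨rfl, rfl⟩ | ⟨rfl, rfl⟩
          · exact hus ⟨ha, hb⟩
          · exact hus ⟨hb, ha⟩
    rw [heq]
end
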